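/- Let (X_{i,n})_{1≤i≤n} be a triangular array of random vectors with values in ℝ^k having finite absolute s-th moments for some s > 2, and define the truncated and centered variables Z_{i,n} := X_{i,n} 1_{{‖X_{i,n}‖ ≤ n}} − E[ X_{i,n} 1_{{‖X_{i,n}‖ ≤ n}} ]. Then for every n ≥ 1 and every t ∈ ℝ^k, (1/n) ∑_{i=1}^n |φ_{Z_{i,n}}(t)| ≤ (1/n) ∑_{i=1}^n |φ_{X_{i,n}}(t)| + 2 ρ_s(n) / n^s. -/

import Mathlib

/-!
Centering only multiplies the characteristic function by a unimodular constant, so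
`|φ_Z| = |φ_{Y}|` for the truncated variable `Y = X 1_{‖X‖ ≤ n}`. Truncation changes
`exp(i⟪t, X⟫)` only where `‖X‖ > n`, and there by at most `2 ≤ 2 ‖X‖^s / n^s`;
integrating gives `|φ_Y(t) - φ_X(t)| ≤ 2 E‖X‖^s / n^s`, which is then averaged over `i`.
-/

open MeasureTheory ProbabilityTheory Filter RealInnerProductSpace

variable {Ω : Type*} [MeasureSpace Ω]

/-- The characteristic function of a random vector `X : Ω → ℝ^k`. -/
noncomputable def charFnRV {k : ℕ} (X : Ω → EuclideanSpace ℝ (Fin k))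
    (t : EuclideanSpace ℝ (Fin k)) : ℂ :=
  ∫ ω, Complex.exp ((⟪t, X ω⟫ : ℝ) * Complex.I) ∂ℙ

/-- The average `ℓ`-th moment `ρ_ℓ(n)` of a triangular array. -/
noncomputable def rho {k : ℕ} (X : ℕ → ℕ → Ω → EuclideanSpace ℝ (Fin k)) (ℓ : ℝ) (n : ℕ) : ℝ :=
  (1 / (n : ℝ)) * ∑ i ∈ Finset.range n, ∫ ω, ‖X i n ω‖ ^ ℓ ∂ℙ

/-- The truncated and centered variables
`Z_{i,n} = X_{i,n} 1_{‖X_{i,n}‖ ≤ n} - E[X_{i,n} 1_{‖X_{i,n}‖ ≤ n}]`. -/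
noncomputable def truncZ {k : ℕ} (X : ℕ → ℕ → Ω → EuclideanSpace ℝ (Fin k)) (i n : ℕ)
    (ω : Ω) : EuclideanSpace ℝ (Fin k) :=
  (if ‖X i n ω‖ ≤ (n : ℝ) then X i n ω else 0) -
    ∫ ω', (if ‖X i n ω'‖ ≤ (n : ℝ) then X i n ω' else 0) ∂ℙ

noncomputable def truncateAt {E : Type*} [NormedAddCommGroup E] (a : ℝ) (x : E) : E :=
  if ‖x‖ ≤ a then x else 0

lemma norm_exp_inner_truncateAt_sub_le {E : Type*} [NormedAddCommGroup E]
    [InnerProductSpace ℝ E] {a s : ℝ} (ha : 0 < a) (hs : 0 ≤ s) (t x : E) :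
    ‖Complex.exp ((⟪t, truncateAt a x⟫ : ℝ) * Complex.I) -
        Complex.exp ((⟪t, x⟫ : ℝ) * Complex.I)‖ ≤ 2 * ‖x‖ ^ s / a ^ s := by
  by_cases hx : ‖x‖ ≤ a
  · rw [truncateAt, if_pos hx, sub_self, norm_zero]
    positivity
  · have hax : a ≤ ‖x‖ := (not_le.mp hx).le
    have hone : 1 ≤ ‖x‖ ^ s / a ^ s :=
      (one_le_div (by positivity)).mpr (Real.rpow_le_rpow ha.le hax hs)
    calc _ ≤ ‖Complex.exp ((⟪t, truncateAt a x⟫ : ℝ) * Complex.I)‖ +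
            ‖Complex.exp ((⟪t, x⟫ : ℝ) * Complex.I)‖ := norm_sub_le _ _
      _ = 2 := by rw [Complex.norm_exp_ofReal_mul_I, Complex.norm_exp_ofReal_mul_I]; norm_num
      _ ≤ 2 * (‖x‖ ^ s / a ^ s) := by linarith
      _ = 2 * ‖x‖ ^ s / a ^ s := by ring

lemma norm_charFnRV_sub_const {k : ℕ} (f : Ω → EuclideanSpace ℝ (Fin k))
    (c t : EuclideanSpace ℝ (Fin k)) :
    ‖charFnRV (fun ω => f ω - c) t‖ = ‖charFnRV f t‖ := by
  have hfactor : ∀ ω, Complex.exp ((⟪t, f ω - c⟫ : ℝ) * Complex.I) =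
      Complex.exp ((⟪t, f ω⟫ : ℝ) * Complex.I) * Complex.exp ((-⟪t, c⟫ : ℝ) * Complex.I) := by
    intro ω
    rw [inner_sub_right, ← Complex.exp_add]
    push_cast
    ring_nf
  simp only [charFnRV, hfactor, integral_mul_const, norm_mul, Complex.norm_exp_ofReal_mul_I,
    mul_one]

lemma integrable_exp_inner_mul_I [IsFiniteMeasure (ℙ : Measure Ω)] {k : ℕ}
    {f : Ω → EuclideanSpace ℝ (Fin k)} (hf : Measurable f) (t : EuclideanSpace ℝ (Fin k)) :
    Integrable (fun ω => Complex.exp ((⟪t, f ω⟫ : ℝ) * Complex.I)) ℙ := by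
  refine Integrable.mono' (integrable_const (1 : ℝ)) ?_ (ae_of_all _ fun ω => ?_)
  · exact (by fun_prop : Measurable fun ω => Complex.exp ((⟪t, f ω⟫ : ℝ) * Complex.I))
      |>.aestronglyMeasurable
  · rw [Complex.norm_exp_ofReal_mul_I]

lemma norm_charFnRV_truncateAt_sub_le [IsFiniteMeasure (ℙ : Measure Ω)] {k : ℕ}
    {f : Ω → EuclideanSpace ℝ (Fin k)} (hf : Measurable f) {a s : ℝ} (ha : 0 < a) (hs : 0 ≤ s)
    (hmom : Integrable (fun ω => ‖f ω‖ ^ s) ℙ) (t : EuclideanSpace ℝ (Fin k)) :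
    ‖charFnRV (fun ω => truncateAt a (f ω)) t - charFnRV f t‖
      ≤ 2 * (∫ ω, ‖f ω‖ ^ s ∂ℙ) / a ^ s := by
  have hmeas_trunc : Measurable fun ω => truncateAt a (f ω) :=
    Measurable.ite (measurableSet_le hf.norm measurable_const) hf measurable_const
  have hIT := integrable_exp_inner_mul_I hmeas_trunc t
  have hIf := integrable_exp_inner_mul_I hf t
  calc ‖charFnRV (fun ω => truncateAt a (f ω)) t - charFnRV f t‖
      ≤ ∫ ω, ‖Complex.exp ((⟪t, truncateAt a (f ω)⟫ : ℝ) * Complex.I) -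
          Complex.exp ((⟪t, f ω⟫ : ℝ) * Complex.I)‖ ∂ℙ := by
        rw [charFnRV, charFnRV, ← integral_sub hIT hIf]
        exact norm_integral_le_integral_norm _
    _ ≤ ∫ ω, 2 * ‖f ω‖ ^ s / a ^ s ∂ℙ :=
        integral_mono (hIT.sub hIf).norm ((hmom.const_mul 2).div_const _)
          fun ω => norm_exp_inner_truncateAt_sub_le ha hs t (f ω)
    _ = 2 * (∫ ω, ‖f ω‖ ^ s ∂ℙ) / a ^ s := by
        rw [integral_div, integral_const_mul]

lemma norm_charFnRV_truncZ_le [IsFiniteMeasure (ℙ : Measure Ω)] {k : ℕ}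
    (X : ℕ → ℕ → Ω → EuclideanSpace ℝ (Fin k)) (i : ℕ) {n : ℕ} (hn : 0 < n)
    (hmeas : Measurable (X i n)) {s : ℝ} (hs : 0 ≤ s)
    (hmom : Integrable (fun ω => ‖X i n ω‖ ^ s) ℙ) (t : EuclideanSpace ℝ (Fin k)) :
    ‖charFnRV (truncZ X i n) t‖
      ≤ ‖charFnRV (X i n) t‖ + 2 * (∫ ω, ‖X i n ω‖ ^ s ∂ℙ) / (n : ℝ) ^ s := by
  -- `truncZ X i n` is `truncateAt n ∘ X i n` minus its mean, definitionally.
  have hZ : ‖charFnRV (truncZ X i n) t‖ =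
      ‖charFnRV (fun ω => truncateAt (n : ℝ) (X i n ω)) t‖ :=
    norm_charFnRV_sub_const (fun ω => truncateAt (n : ℝ) (X i n ω)) _ t
  have htrunc := norm_charFnRV_truncateAt_sub_le hmeas (Nat.cast_pos.mpr hn) hs hmom t
  linarith [norm_sub_norm_le (charFnRV (fun ω => truncateAt (n : ℝ) (X i n ω)) t)
    (charFnRV (X i n) t)]

/-- The average modulus of the characteristic functions of the truncated and centered
variables exceeds the one of the original variables by at most `2 ρ_s(n) / n^s`. -/
theorem statement16 [IsProbabilityMeasure (ℙ : Measure Ω)] {k : ℕ}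
    (X : ℕ → ℕ → Ω → EuclideanSpace ℝ (Fin k))
    (hmeas : ∀ i n, Measurable (X i n))
    (s : ℝ) (hs : 2 < s)
    (hmom : ∀ i n, Integrable (fun ω => ‖X i n ω‖ ^ s) ℙ) :
    ∀ n : ℕ, 1 ≤ n → ∀ t : EuclideanSpace ℝ (Fin k),
      (1 / (n : ℝ)) * ∑ i ∈ Finset.range n, ‖charFnRV (truncZ X i n) t‖
        ≤ (1 / (n : ℝ)) * ∑ i ∈ Finset.range n, ‖charFnRV (X i n) t‖
          + 2 * rho X s n / (n : ℝ) ^ s := by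
  intro n hn t
  calc (1 / (n : ℝ)) * ∑ i ∈ Finset.range n, ‖charFnRV (truncZ X i n) t‖
      ≤ (1 / (n : ℝ)) * ∑ i ∈ Finset.range n,
          (‖charFnRV (X i n) t‖ + 2 * (∫ ω, ‖X i n ω‖ ^ s ∂ℙ) / (n : ℝ) ^ s) := by
        gcongr with i
        exact norm_charFnRV_truncZ_le X i hn (hmeas i n) (by linarith) (hmom i n) t
    _ = (1 / (n : ℝ)) * ∑ i ∈ Finset.range n, ‖charFnRV (X i n) t‖
          + 2 * rho X s n / (n : ℝ) ^ s := by
        simp only [rho, Finset.sum_add_distrib, mul_div_assoc, ← Finset.mul_sum,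
          ← Finset.sum_div]
        ring
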